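/- With A(α) = Σ_{u,v∈ℤ\{0}, u+v≠0} (u+v)²·|u+v|^{−2α}·(|u|^{−α}−|v|^{−α})² and B(α) = Σ_{u,v∈ℤ\{0}, u+v≠0} (u²−v²)·|u|^{−α}|v|^{−α}|u+v|^{−α}·(|u|^{−α}−|v|^{−α}), one has the asymptotics A(α) → 4 and 2^α·B(α) → −12 as α → ∞. Consequently Δ*(α) = −B(α)/A(α) satisfies 2^α·Δ*(α) → 3 as α → ∞. -/

import Mathlib

open Filter

noncomputable def pla (α : ℝ) (x : ℤ) : ℝ := |(x : ℝ)| ^ (-α)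

def PairNZ : Type := {p : ℤ × ℤ // p.1 ≠ 0 ∧ p.2 ≠ 0 ∧ p.1 + p.2 ≠ 0}

noncomputable def Acoef (α : ℝ) : ℝ :=
  ∑' p : PairNZ, ((p.1.1 : ℝ) + (p.1.2 : ℝ)) ^ 2 * pla α (p.1.1 + p.1.2) ^ 2
    * (pla α p.1.1 - pla α p.1.2) ^ 2

noncomputable def Bcoef (α : ℝ) : ℝ :=
  ∑' p : PairNZ, ((p.1.1 : ℝ) ^ 2 - (p.1.2 : ℝ) ^ 2) * pla α p.1.1 * pla α p.1.2
    * pla α (p.1.1 + p.1.2) * (pla α p.1.1 - pla α p.1.2)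

/-
As α → ∞, |n|^(-α) tends to 1 if |n| = 1 and to 0 otherwise, and
2^α |u|^(-α) |v|^(-α) |u+v|^(-α) = (|u v (u+v)| / 2)^(-α) tends to 1 if |u v (u+v)| = 2 and to 0
otherwise (on the index set |u v (u+v)| ≥ 2). So the summands of A and of 2^α B converge pointwise,
with limits supported on the four pairs ±(1,-2), ±(2,-1), where they equal 1 and -3. For α ≥ 3 both
are dominated by C |u|^(-2) |v|^(-2), since each of |u|, |v|, |u+v| is at most twice the product of
the other two; dominated convergence gives A → 4 and 2^α B → -12.
-/

open Topology

lemma tendsto_rpow_neg_atTop_of_one_le {x : ℝ} (hx : 1 ≤ x) :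
    Tendsto (fun α : ℝ => x ^ (-α)) atTop (𝓝 (if x = 1 then 1 else 0)) := by
  split_ifs with h
  · simp [h]
  · exact (tendsto_rpow_atBot_of_base_gt_one x (lt_of_le_of_ne hx (Ne.symm h))).comp
      tendsto_neg_atTop_atBot

lemma Int.abs_add_abs_le_two_mul {x y : ℤ} (hx : x ≠ 0) (hy : y ≠ 0) :
    |x| + |y| ≤ 2 * |x| * |y| := by
  nlinarith [Int.one_le_abs hx, Int.one_le_abs hy]

section pla

lemma one_le_abs_intCast {n : ℤ} (hn : n ≠ 0) : 1 ≤ |(n : ℝ)| := by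
  exact_mod_cast Int.one_le_abs hn

lemma pla_nonneg (α : ℝ) (n : ℤ) : 0 ≤ pla α n := Real.rpow_nonneg (abs_nonneg _) _

lemma pla_le_pla {α β : ℝ} (h : β ≤ α) {n : ℤ} (hn : n ≠ 0) : pla α n ≤ pla β n :=
  Real.rpow_le_rpow_of_exponent_le (one_le_abs_intCast hn) (neg_le_neg h)

lemma pla_le_one {α : ℝ} (hα : 0 ≤ α) {n : ℤ} (hn : n ≠ 0) : pla α n ≤ 1 := by
  simpa [pla] using pla_le_pla hα hn

lemma pla_two (n : ℤ) : pla 2 n = ((n : ℝ) ^ 2)⁻¹ := by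
  rw [pla, Real.rpow_neg (abs_nonneg _), Real.rpow_two, sq_abs]

lemma pla_two_mul_pla_two_le {x y z : ℤ} (hx : x ≠ 0) (hy : y ≠ 0) (hz : z ≠ 0)
    (h : |z| ≤ |x| + |y|) : pla 2 x * pla 2 y ≤ 4 * pla 2 z := by
  have hz2 : z ^ 2 ≤ 4 * x ^ 2 * y ^ 2 := by
    have := pow_le_pow_left₀ (abs_nonneg z) (h.trans (Int.abs_add_abs_le_two_mul hx hy)) 2
    rw [sq_abs, mul_pow, mul_pow, sq_abs, sq_abs] at this
    linarith
  have hz2' : ((z : ℝ) ^ 2) / 4 ≤ (x : ℝ) ^ 2 * (y : ℝ) ^ 2 := by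
    have : (z : ℝ) ^ 2 ≤ 4 * (x : ℝ) ^ 2 * (y : ℝ) ^ 2 := by exact_mod_cast hz2
    rw [div_le_iff₀ four_pos]; linarith
  rw [pla_two, pla_two, pla_two, ← mul_inv, ← div_eq_mul_inv, ← inv_div]
  exact inv_anti₀ (by positivity) hz2'

noncomputable def unitIndicator (n : ℤ) : ℝ := if |n| = 1 then 1 else 0

lemma tendsto_pla {n : ℤ} (hn : n ≠ 0) :
    Tendsto (fun α => pla α n) atTop (𝓝 (unitIndicator n)) := by
  have h := tendsto_rpow_neg_atTop_of_one_le (one_le_abs_intCast hn)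
  have e : |(n : ℝ)| = 1 ↔ |n| = 1 := by norm_cast
  simp only [e] at h
  exact h

lemma summable_pla_two : Summable (fun n : ℤ => pla 2 n) :=
  Real.summable_abs_int_rpow one_lt_two

end pla

section mass

def mass (u v : ℤ) : ℤ := |u * v * (u + v)|

variable {u v : ℤ}

lemma mass_eq : mass u v = |u| * |v| * |u + v| := by rw [mass, abs_mul, abs_mul]

lemma two_le_mass (hu : u ≠ 0) (hv : v ≠ 0) (hs : u + v ≠ 0) : 2 ≤ mass u v := by
  have ha := Int.one_le_abs hu
  have hb := Int.one_le_abs hv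
  have hc := Int.one_le_abs hs
  rw [mass_eq]
  by_contra! h
  have hab : |u| * |v| = 1 := by nlinarith
  have hu1 : |u| = 1 := by nlinarith
  have hv1 : |v| = 1 := by nlinarith
  have hc2 : |u + v| = 2 := by simp only [Int.abs_eq_natAbs] at *; omega
  nlinarith

lemma abs_add_eq_one_of_mass_eq_two (hu : u ≠ 0) (hv : v ≠ 0) (hs : u + v ≠ 0)
    (h : mass u v = 2) : |u + v| = 1 ∨ (|u| = 1 ∧ |v| = 1) := by
  have ha := Int.one_le_abs hu
  have hb := Int.one_le_abs hv
  have hc := Int.one_le_abs hs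
  rw [mass_eq] at h
  by_contra! hne
  have hc2 : 2 ≤ |u + v| := by omega
  have hab : |u| * |v| = 1 := by nlinarith
  exact hne.2 (by nlinarith) (by nlinarith)

lemma abs_sq_sub_sq_le_two_mul_mass (hu : u ≠ 0) (hv : v ≠ 0) :
    |u ^ 2 - v ^ 2| ≤ 2 * mass u v := by
  have h : |u - v| ≤ 2 * |u| * |v| :=
    (abs_sub u v).trans (Int.abs_add_abs_le_two_mul hu hv)
  rw [show u ^ 2 - v ^ 2 = (u + v) * (u - v) by ring, abs_mul, mass_eq]
  nlinarith [abs_nonneg (u + v)]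

lemma sq_mul_sq_le_mass_sq (hs : u + v ≠ 0) : u ^ 2 * v ^ 2 ≤ mass u v ^ 2 := by
  have hc : 1 ≤ (u + v) ^ 2 := by nlinarith [Int.one_le_abs hs, sq_abs (u + v)]
  rw [mass, sq_abs, mul_pow, mul_pow]
  nlinarith [mul_nonneg (sq_nonneg u) (sq_nonneg v)]

lemma two_rpow_mul_pla_mul_pla_mul_pla (α : ℝ) (u v : ℤ) :
    2 ^ α * (pla α u * pla α v * pla α (u + v)) = ((mass u v : ℝ) / 2) ^ (-α) := by
  have hm : (mass u v : ℝ) = |(u : ℝ)| * |(v : ℝ)| * |((u + v : ℤ) : ℝ)| := by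
    rw [mass_eq]; push_cast; rfl
  rw [hm, Real.div_rpow (by positivity) zero_le_two, Real.rpow_neg zero_le_two, div_inv_eq_mul,
    mul_comm, Real.mul_rpow (by positivity) (abs_nonneg _),
    Real.mul_rpow (abs_nonneg _) (abs_nonneg _)]
  rfl

lemma tendsto_two_rpow_mul_pla_mul_pla_mul_pla (hu : u ≠ 0) (hv : v ≠ 0) (hs : u + v ≠ 0) :
    Tendsto (fun α => 2 ^ α * (pla α u * pla α v * pla α (u + v))) atTop
      (𝓝 (if mass u v = 2 then 1 else 0)) := by
  have hm : (2 : ℝ) ≤ mass u v := by exact_mod_cast two_le_mass hu hv hs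
  have h := tendsto_rpow_neg_atTop_of_one_le (x := (mass u v : ℝ) / 2) (by linarith)
  have e : (mass u v : ℝ) / 2 = 1 ↔ mass u v = 2 := by
    rw [div_eq_one_iff_eq two_ne_zero]; norm_cast
  simp only [e, ← two_rpow_mul_pla_mul_pla_mul_pla] at h
  exact h

end mass

section terms

noncomputable def aTerm (α : ℝ) (u v : ℤ) : ℝ :=
  ((u : ℝ) + (v : ℝ)) ^ 2 * pla α (u + v) ^ 2 * (pla α u - pla α v) ^ 2

noncomputable def bTerm (α : ℝ) (u v : ℤ) : ℝ :=
  ((u : ℝ) ^ 2 - (v : ℝ) ^ 2) * pla α u * pla α v * pla α (u + v) * (pla α u - pla α v)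

noncomputable def aLimit (u v : ℤ) : ℝ :=
  ((u : ℝ) + (v : ℝ)) ^ 2 * unitIndicator (u + v) ^ 2 * (unitIndicator u - unitIndicator v) ^ 2

noncomputable def bLimit (u v : ℤ) : ℝ :=
  ((u : ℝ) ^ 2 - (v : ℝ) ^ 2) * (if mass u v = 2 then 1 else 0)
    * (unitIndicator u - unitIndicator v)

variable {α : ℝ} {u v : ℤ}

lemma two_rpow_mul_bTerm :
    2 ^ α * bTerm α u v = ((u : ℝ) ^ 2 - (v : ℝ) ^ 2)
      * (2 ^ α * (pla α u * pla α v * pla α (u + v))) * (pla α u - pla α v) := by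
  rw [bTerm]; ring

lemma tendsto_aTerm (hu : u ≠ 0) (hv : v ≠ 0) (hs : u + v ≠ 0) :
    Tendsto (fun α => aTerm α u v) atTop (𝓝 (aLimit u v)) :=
  (tendsto_const_nhds.mul ((tendsto_pla hs).pow 2)).mul
    (((tendsto_pla hu).sub (tendsto_pla hv)).pow 2)

lemma tendsto_two_rpow_mul_bTerm (hu : u ≠ 0) (hv : v ≠ 0) (hs : u + v ≠ 0) :
    Tendsto (fun α => 2 ^ α * bTerm α u v) atTop (𝓝 (bLimit u v)) := by
  simp only [two_rpow_mul_bTerm]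
  exact (tendsto_const_nhds.mul (tendsto_two_rpow_mul_pla_mul_pla_mul_pla hu hv hs)).mul
    ((tendsto_pla hu).sub (tendsto_pla hv))

lemma abs_aTerm_le (hα : 2 ≤ α) (hu : u ≠ 0) (hv : v ≠ 0) (hs : u + v ≠ 0) :
    |aTerm α u v| ≤ 8 * (pla 2 u * pla 2 v) := by
  have ha := pla_le_pla hα hu
  have hb := pla_le_pla hα hv
  have hc := pla_le_pla hα hs
  have ha0 := pla_nonneg α u
  have hb0 := pla_nonneg α v
  have hc0 := pla_nonneg α (u + v)
  have hsq : ((u : ℝ) + v) ^ 2 * pla α (u + v) ≤ 1 := by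
    calc ((u : ℝ) + v) ^ 2 * pla α (u + v) ≤ ((u : ℝ) + v) ^ 2 * pla 2 (u + v) := by gcongr
      _ ≤ 1 := by rw [pla_two]; push_cast; exact mul_inv_le_one
  have hca : pla α (u + v) * pla α u ≤ 4 * pla 2 v :=
    (mul_le_mul hc ha ha0 (pla_nonneg 2 _)).trans
      (pla_two_mul_pla_two_le hs hu hv (by simpa using abs_sub (u + v) u))
  have hcb : pla α (u + v) * pla α v ≤ 4 * pla 2 u :=
    (mul_le_mul hc hb hb0 (pla_nonneg 2 _)).trans
      (pla_two_mul_pla_two_le hs hv hu (by simpa using abs_sub (u + v) v))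
  rw [abs_of_nonneg (by rw [aTerm]; positivity)]
  calc aTerm α u v
      = ((u : ℝ) + v) ^ 2 * pla α (u + v) * pla α (u + v) * (pla α u - pla α v) ^ 2 := by
        rw [aTerm]; ring
    _ ≤ 1 * pla α (u + v) * (pla α u ^ 2 + pla α v ^ 2) := by
        gcongr; nlinarith [mul_nonneg ha0 hb0]
    _ = pla α (u + v) * pla α u * pla α u + pla α (u + v) * pla α v * pla α v := by ring
    _ ≤ 4 * pla 2 v * pla 2 u + 4 * pla 2 u * pla 2 v := by
        gcongr <;> linarith [pla_nonneg 2 u, pla_nonneg 2 v]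
    _ = 8 * (pla 2 u * pla 2 v) := by ring

lemma abs_two_rpow_mul_bTerm_le (hα : 3 ≤ α) (hu : u ≠ 0) (hv : v ≠ 0) (hs : u + v ≠ 0) :
    |2 ^ α * bTerm α u v| ≤ 16 * (pla 2 u * pla 2 v) := by
  obtain ⟨m, hm_def⟩ : ∃ m : ℝ, m = mass u v := ⟨_, rfl⟩
  have hm : 2 ≤ m := by rw [hm_def]; exact_mod_cast two_le_mass hu hv hs
  have hdecay0 : 0 ≤ 2 ^ α * (pla α u * pla α v * pla α (u + v)) := by
    rw [two_rpow_mul_pla_mul_pla_mul_pla, ← hm_def]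
    exact Real.rpow_nonneg (by linarith) _
  have hdecay : 2 ^ α * (pla α u * pla α v * pla α (u + v)) ≤ 8 * (m ^ 3)⁻¹ := by
    rw [two_rpow_mul_pla_mul_pla_mul_pla, ← hm_def]
    calc (m / 2) ^ (-α) ≤ (m / 2) ^ (-3 : ℝ) :=
          Real.rpow_le_rpow_of_exponent_le (by linarith) (by linarith)
      _ = 8 * (m ^ 3)⁻¹ := by
          rw [Real.rpow_neg (by positivity), show (3 : ℝ) = (3 : ℕ) by norm_num,
            Real.rpow_natCast]
          field_simp
          norm_num
  have hsq : |(u : ℝ) ^ 2 - (v : ℝ) ^ 2| ≤ 2 * m := by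
    rw [hm_def]; exact_mod_cast abs_sq_sub_sq_le_two_mul_mass hu hv
  have hdiff : |pla α u - pla α v| ≤ 1 :=
    abs_sub_le_of_nonneg_of_le (pla_nonneg α u) (pla_le_one (by linarith) hu)
      (pla_nonneg α v) (pla_le_one (by linarith) hv)
  have hmass : (m ^ 2)⁻¹ ≤ pla 2 u * pla 2 v := by
    rw [pla_two, pla_two, ← mul_inv, hm_def]
    exact inv_anti₀ (by positivity) (by exact_mod_cast sq_mul_sq_le_mass_sq hs)
  rw [two_rpow_mul_bTerm, abs_mul, abs_mul, abs_of_nonneg hdecay0]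
  calc |(u : ℝ) ^ 2 - (v : ℝ) ^ 2| * (2 ^ α * (pla α u * pla α v * pla α (u + v)))
        * |pla α u - pla α v|
      ≤ 2 * m * (8 * (m ^ 3)⁻¹) * 1 := by gcongr
    _ = 16 * (m ^ 2)⁻¹ := by field_simp; ring
    _ ≤ 16 * (pla 2 u * pla 2 v) := by gcongr

end terms

section dominantPairs

def dominantPairs : Finset (ℤ × ℤ) := {(1, -2), (-1, 2), (2, -1), (-2, 1)}

variable {u v : ℤ}

lemma mem_dominantPairs (hu : u ≠ 0) (hv : v ≠ 0) (hs : |u + v| = 1) (h : |u| = 1 ∨ |v| = 1) :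
    (u, v) ∈ dominantPairs := by
  simp only [dominantPairs, Finset.mem_insert, Finset.mem_singleton, Prod.mk.injEq]
  simp only [Int.abs_eq_natAbs] at *
  omega

lemma unitIndicator_eq_zero_of_notMem_dominantPairs (hu : u ≠ 0) (hv : v ≠ 0)
    (hs : |u + v| = 1) (h : (u, v) ∉ dominantPairs) :
    unitIndicator u = 0 ∧ unitIndicator v = 0 := by
  simp only [unitIndicator, ite_eq_right_iff, one_ne_zero, imp_false]
  exact ⟨fun hu1 => h (mem_dominantPairs hu hv hs (.inl hu1)),
    fun hv1 => h (mem_dominantPairs hu hv hs (.inr hv1))⟩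

lemma aLimit_eq_zero (hu : u ≠ 0) (hv : v ≠ 0) (h : (u, v) ∉ dominantPairs) :
    aLimit u v = 0 := by
  by_cases hs : |u + v| = 1
  · obtain ⟨hu0, hv0⟩ := unitIndicator_eq_zero_of_notMem_dominantPairs hu hv hs h
    simp [aLimit, hu0, hv0]
  · simp [aLimit, unitIndicator, hs]

lemma bLimit_eq_zero (hu : u ≠ 0) (hv : v ≠ 0) (hs : u + v ≠ 0) (h : (u, v) ∉ dominantPairs) :
    bLimit u v = 0 := by
  by_cases hm : mass u v = 2
  · rcases abs_add_eq_one_of_mass_eq_two hu hv hs hm with hs1 | ⟨hu1, hv1⟩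
    · obtain ⟨hu0, hv0⟩ := unitIndicator_eq_zero_of_notMem_dominantPairs hu hv hs1 h
      simp [bLimit, hu0, hv0]
    · simp [bLimit, unitIndicator, hu1, hv1]
  · simp [bLimit, hm]

lemma tsum_pairNZ_eq_sum_dominantPairs {f : ℤ × ℤ → ℝ}
    (hf : ∀ p : PairNZ, p.1 ∉ dominantPairs → f p.1 = 0) :
    ∑' p : PairNZ, f p.1 = ∑ p ∈ dominantPairs, f p := by
  change ∑' p : {p : ℤ × ℤ // p.1 ≠ 0 ∧ p.2 ≠ 0 ∧ p.1 + p.2 ≠ 0}, f p.1 = _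
  rw [tsum_eq_sum (s := dominantPairs.subtype _) fun p hp => hf p (by simpa using hp),
    Finset.sum_subtype_eq_sum_filter, Finset.filter_true_of_mem (by decide)]

lemma tsum_aLimit : ∑' p : PairNZ, aLimit p.1.1 p.1.2 = 4 := by
  rw [tsum_pairNZ_eq_sum_dominantPairs (f := fun p => aLimit p.1 p.2)
    fun p hp => aLimit_eq_zero p.2.1 p.2.2.1 hp]
  norm_num [dominantPairs, aLimit, unitIndicator]

lemma tsum_bLimit : ∑' p : PairNZ, bLimit p.1.1 p.1.2 = -12 := by
  rw [tsum_pairNZ_eq_sum_dominantPairs (f := fun p => bLimit p.1 p.2)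
    fun p hp => bLimit_eq_zero p.2.1 p.2.2.1 p.2.2.2 hp]
  norm_num [dominantPairs, bLimit, unitIndicator, mass]

end dominantPairs

lemma tendsto_tsum_pairNZ {F : ℝ → ℤ → ℤ → ℝ} {g : ℤ → ℤ → ℝ} {C α₀ : ℝ}
    (hF : ∀ p : PairNZ, Tendsto (fun α => F α p.1.1 p.1.2) atTop (𝓝 (g p.1.1 p.1.2)))
    (hbound : ∀ α ≥ α₀, ∀ p : PairNZ, |F α p.1.1 p.1.2| ≤ C * (pla 2 p.1.1 * pla 2 p.1.2)) :
    Tendsto (fun α => ∑' p : PairNZ, F α p.1.1 p.1.2) atTop (𝓝 (∑' p : PairNZ, g p.1.1 p.1.2)) :=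
  have hsum : Summable fun p : PairNZ => pla 2 p.1.1 * pla 2 p.1.2 :=
    (summable_pla_two.mul_of_nonneg summable_pla_two (pla_nonneg 2) (pla_nonneg 2)).comp_injective
      Subtype.val_injective
  tendsto_tsum_of_dominated_convergence (hsum.mul_left C) hF
    (eventually_atTop.2 ⟨α₀, hbound⟩)

theorem stmt_15 :
    Tendsto Acoef atTop (nhds 4) ∧
    Tendsto (fun α : ℝ => (2 : ℝ) ^ α * Bcoef α) atTop (nhds (-12)) ∧
    Tendsto (fun α : ℝ => (2 : ℝ) ^ α * (-(Bcoef α) / Acoef α)) atTop (nhds 3) := by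
  have hA : Tendsto Acoef atTop (𝓝 4) := by
    rw [← tsum_aLimit]
    exact tendsto_tsum_pairNZ (fun p => tendsto_aTerm p.2.1 p.2.2.1 p.2.2.2)
      fun α hα p => abs_aTerm_le hα p.2.1 p.2.2.1 p.2.2.2
  have hB : Tendsto (fun α : ℝ => (2 : ℝ) ^ α * Bcoef α) atTop (𝓝 (-12)) := by
    simp only [Bcoef, ← tsum_mul_left, ← tsum_bLimit]
    exact tendsto_tsum_pairNZ (F := fun α u v => 2 ^ α * bTerm α u v)
      (fun p => tendsto_two_rpow_mul_bTerm p.2.1 p.2.2.1 p.2.2.2)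
      fun α hα p => abs_two_rpow_mul_bTerm_le hα p.2.1 p.2.2.1 p.2.2.2
  refine ⟨hA, hB, ?_⟩
  convert hB.neg.div hA four_ne_zero using 1
  · ext α; simp only [Pi.div_apply]; ring
  · norm_num
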